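/- arXiv:2605.29944 — 4 statements merged into one kernel-verified Lean document; each statement's English description precedes it below -/
import Mathlib

section
/- Let X_L and X_R be disjoint subsets of V. Suppose a, a' ∈ F₂^{X_L} have equal boundary signatures, i.e. aᵀ·A[X_L, V\X_L] = a'ᵀ·A[X_L, V\X_L], and b, b' ∈ F₂^{X_R} have equal boundary signatures, i.e. bᵀ·A[X_R, V\X_R] = b'ᵀ·A[X_R, V\X_R]. Then aᵀ·A[X_L, X_R]·b = a'ᵀ·A[X_L, X_R]·b' in F₂. In other words, the cross-term parity χ = aᵀ·A[X_L, X_R]·b depends only on the two boundary signatures and not on the chosen assignments realizing them. -/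
open Classical

/-- The `F₂`-adjacency matrix of a simple graph. -/
noncomputable def adjMat {V : Type*} [Fintype V] (G : SimpleGraph V) : Matrix V V (ZMod 2) :=
  fun u v => if G.Adj u v then 1 else 0

/-- The boundary signature `σ_X(z) = zᵀ·A[X, V\X]` of an assignment `z ∈ F₂^X`. -/
noncomputable def bsig {V : Type*} [Fintype V] (G : SimpleGraph V) (X : Finset V)
    (z : {v // v ∈ X} → ZMod 2) : {w : V // w ∉ X} → ZMod 2 :=
  fun w => ∑ v : {v // v ∈ X}, z v * adjMat G v.1 w.1

/-! Both sides are values of the bilinear form `(a, b) ↦ aᵀ·A[X_L, X_R]·b`. Summing over `X_L` first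
turns it into `σ_L(a)·b`, since `X_R ⊆ V \ X_L`; by symmetry of `A`, summing over `X_R` first turns
it into `a·σ_R(b)`. So `a` may be replaced by `a'`, and then `b` by `b'`. -/

lemma adjMat_comm {V : Type*} [Fintype V] (G : SimpleGraph V) (u v : V) :
    adjMat G u v = adjMat G v u := by
  simp only [adjMat, G.adj_comm]

section CrossTerm

variable {V : Type*} [Fintype V] (G : SimpleGraph V) {XL XR : Finset V} (hdisj : Disjoint XL XR)
  (a : {v // v ∈ XL} → ZMod 2) (b : {v // v ∈ XR} → ZMod 2)

lemma cross_term_eq_sum_bsig_left_mul :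
    ∑ u : {v // v ∈ XL}, ∑ v : {v // v ∈ XR}, a u * adjMat G u.1 v.1 * b v
      = ∑ v : {v // v ∈ XR}, bsig G XL a ⟨v.1, Finset.disjoint_right.mp hdisj v.2⟩ * b v := by
  rw [Finset.sum_comm]
  simp only [bsig, Finset.sum_mul]

lemma cross_term_eq_sum_mul_bsig_right :
    ∑ u : {v // v ∈ XL}, ∑ v : {v // v ∈ XR}, a u * adjMat G u.1 v.1 * b v
      = ∑ u : {v // v ∈ XL}, a u * bsig G XR b ⟨u.1, Finset.disjoint_left.mp hdisj u.2⟩ := by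
  simp only [bsig, Finset.mul_sum]
  refine Finset.sum_congr rfl fun u _ => Finset.sum_congr rfl fun v _ => ?_
  rw [adjMat_comm G u.1 v.1]
  ring

end CrossTerm

theorem cross_term_well_defined_general {V : Type*} [Fintype V]
    (G : SimpleGraph V) (XL XR : Finset V) (hdisj : Disjoint XL XR)
    (a a' : {v // v ∈ XL} → ZMod 2) (b b' : {v // v ∈ XR} → ZMod 2)
    (ha : bsig G XL a = bsig G XL a')
    (hb : bsig G XR b = bsig G XR b') :
    ∑ u : {v // v ∈ XL}, ∑ v : {v // v ∈ XR}, a u * adjMat G u.1 v.1 * b v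
      = ∑ u : {v // v ∈ XL}, ∑ v : {v // v ∈ XR}, a' u * adjMat G u.1 v.1 * b' v := by
  rw [cross_term_eq_sum_bsig_left_mul G hdisj, ha, ← cross_term_eq_sum_bsig_left_mul G hdisj,
    cross_term_eq_sum_mul_bsig_right G hdisj, hb, ← cross_term_eq_sum_mul_bsig_right G hdisj]

/-- the cross-term parity `aᵀ·A[X_L, X_R]·b` depends only on the boundary
signatures of `a` and `b`, not on the chosen assignments realizing them. -/
theorem cross_term_well_defined {V : Type*} [Fintype V] [DecidableEq V]
    (G : SimpleGraph V) (XL XR : Finset V) (hdisj : Disjoint XL XR)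
    (a a' : {v // v ∈ XL} → ZMod 2) (b b' : {v // v ∈ XR} → ZMod 2)
    (ha : bsig G XL a = bsig G XL a')
    (hb : bsig G XR b = bsig G XR b') :
    ∑ u : {v // v ∈ XL}, ∑ v : {v // v ∈ XR}, a u * adjMat G u.1 v.1 * b v
      = ∑ u : {v // v ∈ XL}, ∑ v : {v // v ∈ XR}, a' u * adjMat G u.1 v.1 * b' v :=
  cross_term_well_defined_general G XL XR hdisj a a' b b' ha hb
end

section
/- Let X_L and X_R be disjoint subsets of V and X_t = X_L ∪ X_R. For assignments a : X_L → {0,1} and b : X_R → {0,1}, let z : X_t → {0,1} agree with a on X_L and with b on X_R, and let χ ∈ {0,1} ⊆ ℕ be the parity of the number of edges {u,v} of G with u ∈ X_L, v ∈ X_R and a_u = b_v = 1. Then φ_{X_t}(z) = φ_{X_L}(a) + φ_{X_R}(b) + η·χ in ZMod r. -/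
open Classical

/-- `m_X(z)`: the number of edges `{u,v}` of `G` with both endpoints in `X` and both
selected by the 0/1 assignment `z`. -/
noncomputable def mX {V : Type*} [Fintype V] (G : SimpleGraph V) (X : Finset V)
    (z : {v // v ∈ X} → Bool) : ℕ :=
  Nat.card {e : Sym2 V // e ∈ G.edgeSet ∧ ∀ v ∈ e, ∃ h : v ∈ X, z ⟨v, h⟩ = true}

/-- The internal residue `φ_X(z) = Σ_{v∈X} b_v·z_v + η·m_X(z)` in `ZMod r`, with `η = r/2`. -/
noncomputable def phiX {V : Type*} [Fintype V] (G : SimpleGraph V) (r : ℕ)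
    (bc : V → ZMod r) (X : Finset V) (z : {v // v ∈ X} → Bool) : ZMod r :=
  (∑ v : {v // v ∈ X}, bc v.1 * (if z v then 1 else 0))
    + ((r / 2 : ℕ) : ZMod r) * (mX G X z : ZMod r)

/-!
Record an assignment by the set of vertices it selects. Selected sets are additive under the
join, so the linear part of `φ` splits as a sum over a disjoint union. An edge with both ends
selected in `X_L ∪ X_R` lies inside the selected part of `X_L`, inside that of `X_R`, or
crosses between them, so `m_{X_t} = m_{X_L} + m_{X_R} + #crossing`. Finally `2η = r = 0` in
`ZMod r`, so `η` times the crossing count only depends on its parity `χ`.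
-/

open Finset

namespace SimpleGraph

variable {V : Type*} {G : SimpleGraph V}

theorem injOn_interedges_of_disjoint {S T : Finset V} (hST : Disjoint S T) :
    Set.InjOn (Function.uncurry Sym2.mk) (G.interedges S T : Set (V × V)) := by
  rintro ⟨x, y⟩ hxy ⟨x', y'⟩ hxy' h
  simp only [mem_coe, mem_interedges_iff] at hxy hxy'
  rcases Sym2.eq_iff.mp h with ⟨rfl, rfl⟩ | ⟨rfl, rfl⟩
  · rfl
  · exact (Finset.disjoint_left.mp hST hxy.1 hxy'.2.1).elim

variable [Fintype V] [DecidableEq V] (G)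

theorem edgeFinset_inter_sym2_union (S T : Finset V) :
    G.edgeFinset ∩ (S ∪ T).sym2 = G.edgeFinset ∩ S.sym2 ∪ G.edgeFinset ∩ T.sym2
      ∪ (G.interedges S T).image (Function.uncurry Sym2.mk) := by
  ext e
  induction e using Sym2.ind with
  | _ u v =>
    simp only [mem_union, mem_inter, mem_edgeFinset, mem_edgeSet, mk_mem_sym2_iff, mem_image,
      Prod.exists, mem_interedges_iff, Function.uncurry_apply_pair, Sym2.eq_iff]
    constructor
    · rintro ⟨huv, hu | hu, hv | hv⟩
      · exact Or.inl (Or.inl ⟨huv, hu, hv⟩)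
      · exact Or.inr ⟨u, v, ⟨hu, hv, huv⟩, Or.inl ⟨rfl, rfl⟩⟩
      · exact Or.inr ⟨v, u, ⟨hv, hu, huv.symm⟩, Or.inr ⟨rfl, rfl⟩⟩
      · exact Or.inl (Or.inr ⟨huv, hu, hv⟩)
    · rintro ((⟨huv, hu, hv⟩ | ⟨huv, hu, hv⟩) |
        ⟨x, y, ⟨hx, hy, hxy⟩, ⟨rfl, rfl⟩ | ⟨rfl, rfl⟩⟩)
      · exact ⟨huv, Or.inl hu, Or.inl hv⟩
      · exact ⟨huv, Or.inr hu, Or.inr hv⟩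
      · exact ⟨hxy, Or.inl hx, Or.inr hy⟩
      · exact ⟨hxy.symm, Or.inr hy, Or.inl hx⟩

theorem card_edgeFinset_inter_sym2_union {S T : Finset V} (hST : Disjoint S T) :
    #(G.edgeFinset ∩ (S ∪ T).sym2) =
      #(G.edgeFinset ∩ S.sym2) + #(G.edgeFinset ∩ T.sym2) + #(G.interedges S T) := by
  have hinner : Disjoint (G.edgeFinset ∩ S.sym2) (G.edgeFinset ∩ T.sym2) := by
    refine Finset.disjoint_left.mpr fun e heS heT => ?_
    induction e using Sym2.ind with
    | _ u v =>
      exact Finset.disjoint_left.mp hST (mk_mem_sym2_iff.mp (mem_inter.mp heS).2).1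
        (mk_mem_sym2_iff.mp (mem_inter.mp heT).2).1
  have hcross : Disjoint (G.edgeFinset ∩ S.sym2 ∪ G.edgeFinset ∩ T.sym2)
      ((G.interedges S T).image (Function.uncurry Sym2.mk)) := by
    simp only [Finset.disjoint_left, mem_union, mem_inter, mem_image, Prod.exists,
      mem_interedges_iff, Function.uncurry_apply_pair, not_exists, not_and]
    rintro _ (⟨-, he⟩ | ⟨-, he⟩) x y ⟨hx, hy, -⟩ rfl
    · exact Finset.disjoint_left.mp hST (mk_mem_sym2_iff.mp he).2 hy |>.elim
    · exact Finset.disjoint_left.mp hST hx (mk_mem_sym2_iff.mp he).1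
  rw [edgeFinset_inter_sym2_union, card_union_of_disjoint hcross,
    card_union_of_disjoint hinner, card_image_of_injOn (injOn_interedges_of_disjoint hST)]

end SimpleGraph

section Selected

variable {V : Type*}

def selected (X : Finset V) (z : {v // v ∈ X} → Bool) : Finset V :=
  (X.attach.filter fun v => z v).map (Function.Embedding.subtype _)

theorem mem_selected {X : Finset V} {z : {v // v ∈ X} → Bool} {v : V} :
    v ∈ selected X z ↔ ∃ h : v ∈ X, z ⟨v, h⟩ = true := by
  simp [selected]

theorem selected_subset (X : Finset V) (z : {v // v ∈ X} → Bool) : selected X z ⊆ X :=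
  fun _ hv => (mem_selected.mp hv).1

theorem selected_union [DecidableEq V] {XL XR : Finset V}
    {a : {v // v ∈ XL} → Bool} {b : {v // v ∈ XR} → Bool}
    {z : {v // v ∈ XL ∪ XR} → Bool}
    (hza : ∀ (v : V) (h : v ∈ XL), z ⟨v, Finset.mem_union_left XR h⟩ = a ⟨v, h⟩)
    (hzb : ∀ (v : V) (h : v ∈ XR), z ⟨v, Finset.mem_union_right XL h⟩ = b ⟨v, h⟩) :
    selected (XL ∪ XR) z = selected XL a ∪ selected XR b := by
  ext v
  rw [Finset.mem_union, mem_selected, mem_selected, mem_selected]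
  constructor
  · rintro ⟨hv, hzv⟩
    rcases Finset.mem_union.mp hv with hL | hR
    · exact Or.inl ⟨hL, hza v hL ▸ hzv⟩
    · exact Or.inr ⟨hR, hzb v hR ▸ hzv⟩
  · rintro (⟨hL, hav⟩ | ⟨hR, hbv⟩)
    · exact ⟨_, (hza v hL).trans hav⟩
    · exact ⟨_, (hzb v hR).trans hbv⟩

theorem sum_mul_indicator_eq_sum_selected {R : Type*} [NonAssocSemiring R] (f : V → R)
    (X : Finset V) (z : {v // v ∈ X} → Bool) :
    ∑ v : {v // v ∈ X}, f v.1 * (if z v then 1 else 0) = ∑ v ∈ selected X z, f v := by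
  simp only [mul_ite, mul_one, mul_zero, selected, sum_map, Function.Embedding.subtype_apply,
    sum_filter, univ_eq_attach]

theorem mX_eq_card_edgeFinset_inter_sym2 [Fintype V] [DecidableEq V] (G : SimpleGraph V)
    (X : Finset V) (z : {v // v ∈ X} → Bool) :
    mX G X z = #(G.edgeFinset ∩ (selected X z).sym2) := by
  rw [mX, Nat.card_eq_fintype_card, Fintype.card_subtype]
  congr 1
  ext e
  simp only [mem_filter, mem_univ, true_and, mem_inter, SimpleGraph.mem_edgeFinset, mem_sym2_iff,
    mem_selected]

theorem card_adj_pairs_eq_card_interedges [Fintype V] (G : SimpleGraph V) {XL XR : Finset V}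
    (a : {v // v ∈ XL} → Bool) (b : {v // v ∈ XR} → Bool) :
    #(Finset.univ.filter (fun p : {v // v ∈ XL} × {v // v ∈ XR} =>
        G.Adj p.1.1 p.2.1 ∧ a p.1 = true ∧ b p.2 = true)) =
      #(G.interedges (selected XL a) (selected XR b)) := by
  refine card_bij (fun p _ => (p.1.1, p.2.1)) ?_ ?_ ?_
  · rintro ⟨u, w⟩ hp
    simp only [mem_filter, mem_univ, true_and] at hp
    exact (G.mk_mem_interedges_iff).mpr ⟨mem_selected.mpr ⟨u.2, hp.2.1⟩,
      mem_selected.mpr ⟨w.2, hp.2.2⟩, hp.1⟩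
  · rintro ⟨u, w⟩ - ⟨u', w'⟩ - h
    simp only [Prod.mk.injEq] at h
    rw [Subtype.ext h.1, Subtype.ext h.2]
  · rintro ⟨u, w⟩ h
    obtain ⟨hu, hw, huw⟩ := (G.mem_interedges_iff).mp h
    obtain ⟨huL, hau⟩ := mem_selected.mp hu
    obtain ⟨hwR, hbw⟩ := mem_selected.mp hw
    exact ⟨(⟨u, huL⟩, ⟨w, hwR⟩), by simp [huw, hau, hbw], rfl⟩

end Selected

theorem natCast_half_mul_eq_mul_mod_two {r : ℕ} (hr : Even r) (c : ℕ) :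
    ((r / 2 : ℕ) : ZMod r) * c = ((r / 2 : ℕ) : ZMod r) * ((c % 2 : ℕ) : ZMod r) := by
  have hhalf : ((r / 2 : ℕ) : ZMod r) * 2 = 0 := by
    exact_mod_cast (congrArg (Nat.cast : ℕ → ZMod r) (Nat.div_mul_cancel hr.two_dvd)).trans
      (ZMod.natCast_self r)
  conv_lhs => rw [← Nat.mod_add_div c 2]
  push_cast
  linear_combination ((c / 2 : ℕ) : ZMod r) * hhalf

theorem residue_join_general {V : Type*} [Fintype V] [DecidableEq V]
    (G : SimpleGraph V) (r : ℕ) (hre : Even r)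
    (bc : V → ZMod r) (XL XR : Finset V) (hdisj : Disjoint XL XR)
    (a : {v // v ∈ XL} → Bool) (b : {v // v ∈ XR} → Bool)
    (z : {v // v ∈ XL ∪ XR} → Bool)
    (hza : ∀ (v : V) (h : v ∈ XL), z ⟨v, Finset.mem_union_left XR h⟩ = a ⟨v, h⟩)
    (hzb : ∀ (v : V) (h : v ∈ XR), z ⟨v, Finset.mem_union_right XL h⟩ = b ⟨v, h⟩)
    (χ : ℕ)
    (hχ : χ = ((Finset.univ.filter (fun p : {v // v ∈ XL} × {v // v ∈ XR} =>
        G.Adj p.1.1 p.2.1 ∧ a p.1 = true ∧ b p.2 = true)).card) % 2) :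
    phiX G r bc (XL ∪ XR) z
      = phiX G r bc XL a + phiX G r bc XR b + ((r / 2 : ℕ) : ZMod r) * (χ : ZMod r) := by
  have hsel : Disjoint (selected XL a) (selected XR b) :=
    hdisj.mono (selected_subset XL a) (selected_subset XR b)
  simp only [phiX, sum_mul_indicator_eq_sum_selected, mX_eq_card_edgeFinset_inter_sym2,
    selected_union hza hzb, sum_union hsel, G.card_edgeFinset_inter_sym2_union hsel, hχ,
    card_adj_pairs_eq_card_interedges, ← natCast_half_mul_eq_mul_mod_two hre]
  push_cast
  ring

/-- the internal residue of a joined assignment is the sum of the child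
residues plus `η·χ`, where `χ` is the parity of the number of selected crossing edges. -/
theorem residue_join {V : Type*} [Fintype V] [DecidableEq V]
    (G : SimpleGraph V) (r : ℕ) (hr : 2 ≤ r) (hre : Even r)
    (bc : V → ZMod r) (XL XR : Finset V) (hdisj : Disjoint XL XR)
    (a : {v // v ∈ XL} → Bool) (b : {v // v ∈ XR} → Bool)
    (z : {v // v ∈ XL ∪ XR} → Bool)
    (hza : ∀ (v : V) (h : v ∈ XL), z ⟨v, Finset.mem_union_left XR h⟩ = a ⟨v, h⟩)
    (hzb : ∀ (v : V) (h : v ∈ XR), z ⟨v, Finset.mem_union_right XL h⟩ = b ⟨v, h⟩)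
    (χ : ℕ)
    (hχ : χ = ((Finset.univ.filter (fun p : {v // v ∈ XL} × {v // v ∈ XR} =>
        G.Adj p.1.1 p.2.1 ∧ a p.1 = true ∧ b p.2 = true)).card) % 2) :
    phiX G r bc (XL ∪ XR) z
      = phiX G r bc XL a + phiX G r bc XR b + ((r / 2 : ℕ) : ZMod r) * (χ : ZMod r) :=
  residue_join_general G r hre bc XL XR hdisj a b z hza hzb χ hχ
end

section
/- Let X_L and X_R be disjoint subsets of V, X_t = X_L ∪ X_R, and Y = V \ X_t. Suppose Ψ : F₂^{V\X_L} × F₂^{V\X_R} → F₂ is any function satisfying Ψ(σ_{X_L}(a), σ_{X_R}(b)) = aᵀ·A[X_L, X_R]·b for all a ∈ F₂^{X_L} and b ∈ F₂^{X_R}. Then for every γ ∈ F₂^Y and every s ∈ ZMod r, the number of assignments z : X_t → {0,1} with σ_{X_t}(z) = γ and φ_{X_t}(z) = s equals the sum, over all α ∈ F₂^{V\X_L}, β ∈ F₂^{V\X_R} and p, q ∈ ZMod r such that α|_Y + β|_Y = γ and p + q + η·(lift of Ψ(α,β) to {0,1} ⊆ ℕ) = s in ZMod r, of the product (number of a : X_L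 → {0,1} with σ_{X_L}(a) = α and φ_{X_L}(a) = p) × (number of b : X_R → {0,1} with σ_{X_R}(b) = β and φ_{X_R}(b) = q). (This is the join-step invariant establishing correctness of the rank-decomposition dynamic program.) -/
open Classical

/-- The boundary signature of a 0/1 assignment, identified with an `F₂`-vector. -/
noncomputable def bsigB {V : Type*} [Fintype V] (G : SimpleGraph V) (X : Finset V)
    (z : {v // v ∈ X} → Bool) : {w : V // w ∉ X} → ZMod 2 :=
  bsig G X (fun v => if z v then 1 else 0)

/-! ### Auxiliary lemmas -/

private lemma sum_sub {V : Type*} {M : Type*} [AddCommMonoid M] (s : Finset V)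
    (f : {v // v ∈ s} → M) :
    ∑ v : {v // v ∈ s}, f v = ∑ v ∈ s, (if h : v ∈ s then f ⟨v, h⟩ else 0) := by
  rw [Finset.univ_eq_attach, ← Finset.sum_attach s (fun v => if h : v ∈ s then f ⟨v, h⟩ else 0)]
  exact Finset.sum_congr rfl fun v _ => by rw [dif_pos v.2]

private lemma sum_union_subtype {V : Type*} [DecidableEq V] {M : Type*} [AddCommMonoid M]
    (XL XR : Finset V) (hdisj : Disjoint XL XR) (f : {v // v ∈ XL ∪ XR} → M) :
    ∑ v : {v // v ∈ XL ∪ XR}, f v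
      = (∑ v : {v // v ∈ XL}, f ⟨v.1, Finset.mem_union_left _ v.2⟩)
        + ∑ v : {v // v ∈ XR}, f ⟨v.1, Finset.mem_union_right _ v.2⟩ := by
  rw [sum_sub, Finset.sum_union hdisj, sum_sub XL, sum_sub XR]
  congr 1 <;> refine Finset.sum_congr rfl fun v hv => ?_
  · rw [dif_pos (Finset.mem_union_left _ hv), dif_pos hv]
  · rw [dif_pos (Finset.mem_union_right _ hv), dif_pos hv]

private lemma bsigB_union {V : Type*} [Fintype V] [DecidableEq V] (G : SimpleGraph V)
    (XL XR : Finset V) (hdisj : Disjoint XL XR) (z : {v // v ∈ XL ∪ XR} → Bool)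
    (w : {w : V // w ∉ XL ∪ XR}) :
    bsigB G (XL ∪ XR) z w
      = bsigB G XL (fun v => z ⟨v.1, Finset.mem_union_left _ v.2⟩)
          ⟨w.1, fun h => w.2 (Finset.mem_union_left XR h)⟩
        + bsigB G XR (fun v => z ⟨v.1, Finset.mem_union_right _ v.2⟩)
          ⟨w.1, fun h => w.2 (Finset.mem_union_right XL h)⟩ := by
  unfold bsigB bsig
  exact sum_union_subtype XL XR hdisj
    (fun v => (if z v then (1 : ZMod 2) else 0) * adjMat G v.1 w.1)

private lemma mX_eq_card {V : Type*} [Fintype V] [DecidableEq V] (G : SimpleGraph V)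
    (X : Finset V) (z : {v // v ∈ X} → Bool) :
    mX G X z = (Finset.univ.filter
      (fun e : Sym2 V => e ∈ G.edgeSet ∧ ∀ v ∈ e, ∃ h : v ∈ X, z ⟨v, h⟩ = true)).card := by
  rw [mX, Nat.card_eq_fintype_card, Fintype.card_subtype]

/-- The cross-edge count, as a count of pairs. -/
noncomputable def crossCard {V : Type*} [Fintype V] [DecidableEq V] (G : SimpleGraph V)
    (XL XR : Finset V) (z : {v // v ∈ XL ∪ XR} → Bool) : ℕ :=
  (Finset.univ.filter (fun uv : {v // v ∈ XL} × {v // v ∈ XR} =>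
    G.Adj uv.1.1 uv.2.1
      ∧ z ⟨uv.1.1, Finset.mem_union_left _ uv.1.2⟩ = true
      ∧ z ⟨uv.2.1, Finset.mem_union_right _ uv.2.2⟩ = true)).card

private lemma mX_union {V : Type*} [Fintype V] [DecidableEq V] (G : SimpleGraph V)
    (XL XR : Finset V) (hdisj : Disjoint XL XR) (z : {v // v ∈ XL ∪ XR} → Bool) :
    mX G (XL ∪ XR) z
      = mX G XL (fun v => z ⟨v.1, Finset.mem_union_left _ v.2⟩)
        + mX G XR (fun v => z ⟨v.1, Finset.mem_union_right _ v.2⟩)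
        + crossCard G XL XR z := by
  classical
  set S : Finset (Sym2 V) := Finset.univ.filter
      (fun e : Sym2 V => e ∈ G.edgeSet ∧ ∀ v ∈ e, ∃ h : v ∈ XL ∪ XR, z ⟨v, h⟩ = true) with hS
  have hU : mX G (XL ∪ XR) z = S.card := mX_eq_card G (XL ∪ XR) z
  have hsplit1 := Finset.card_filter_add_card_filter_not
    (s := S) (p := fun e => ∀ v ∈ e, v ∈ XL)
  have hsplit2 := Finset.card_filter_add_card_filter_not
    (s := S.filter (fun e => ¬ ∀ v ∈ e, v ∈ XL)) (p := fun e => ∀ v ∈ e, v ∈ XR)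
  have hL : (S.filter (fun e => ∀ v ∈ e, v ∈ XL)).card
      = mX G XL (fun v => z ⟨v.1, Finset.mem_union_left _ v.2⟩) := by
    rw [mX_eq_card]
    congr 1
    ext e
    simp only [hS, Finset.mem_filter, Finset.mem_univ, true_and, and_assoc]
    constructor
    · rintro ⟨he, hsel, hmem⟩
      refine ⟨he, fun v hv => ⟨hmem v hv, ?_⟩⟩
      obtain ⟨h', hz⟩ := hsel v hv
      exact hz
    · rintro ⟨he, hsel⟩
      refine ⟨he, fun v hv => ?_, fun v hv => (hsel v hv).1⟩
      obtain ⟨h', hz⟩ := hsel v hv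
      exact ⟨Finset.mem_union_left _ h', hz⟩
  have hR : ((S.filter (fun e => ¬ ∀ v ∈ e, v ∈ XL)).filter (fun e => ∀ v ∈ e, v ∈ XR)).card
      = mX G XR (fun v => z ⟨v.1, Finset.mem_union_right _ v.2⟩) := by
    rw [mX_eq_card]
    congr 1
    ext e
    simp only [hS, Finset.mem_filter, Finset.mem_univ, true_and, and_assoc]
    constructor
    · rintro ⟨he, hsel, _, hmem⟩
      refine ⟨he, fun v hv => ⟨hmem v hv, ?_⟩⟩
      obtain ⟨h', hz⟩ := hsel v hv
      exact hz
    · rintro ⟨he, hsel⟩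
      obtain ⟨u, v, rfl⟩ : ∃ u v, e = s(u, v) := by
        induction e using Sym2.ind with | _ u v => exact ⟨u, v, rfl⟩
      have huR : u ∈ XR := (hsel u (Sym2.mem_mk_left u v)).1
      refine ⟨he, fun w hw => ?_, fun hall => ?_, fun w hw => (hsel w hw).1⟩
      · obtain ⟨h', hz⟩ := hsel w hw
        exact ⟨Finset.mem_union_right _ h', hz⟩
      · exact Finset.disjoint_left.mp hdisj (hall u (Sym2.mem_mk_left u v)) huR
  have hC : ((S.filter (fun e => ¬ ∀ v ∈ e, v ∈ XL)).filter
        (fun e => ¬ ∀ v ∈ e, v ∈ XR)).card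
      = crossCard G XL XR z := by
    rw [crossCard]
    refine (Finset.card_bij
      (fun uv (_ : uv ∈ _) => s(uv.1.1, uv.2.1)) ?_ ?_ ?_).symm
    · rintro ⟨⟨u, hu⟩, ⟨v, hv⟩⟩ hm
      simp only [Finset.mem_filter, Finset.mem_univ, true_and] at hm
      obtain ⟨hadj, hzu, hzv⟩ := hm
      simp only [hS, Finset.mem_filter, Finset.mem_univ, true_and]
      have hsel : ∀ w ∈ s(u, v), ∃ h : w ∈ XL ∪ XR, z ⟨w, h⟩ = true := by
        intro w hw
        rcases Sym2.mem_iff.mp hw with rfl | rfl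
        · exact ⟨Finset.mem_union_left _ hu, hzu⟩
        · exact ⟨Finset.mem_union_right _ hv, hzv⟩
      refine ⟨⟨⟨hadj, hsel⟩, fun hall => ?_⟩, fun hall => ?_⟩
      · exact Finset.disjoint_left.mp hdisj (hall v (Sym2.mem_mk_right u v)) hv
      · exact Finset.disjoint_left.mp hdisj hu (hall u (Sym2.mem_mk_left u v))
    · rintro ⟨⟨u, hu⟩, ⟨v, hv⟩⟩ _ ⟨⟨u', hu'⟩, ⟨v', hv'⟩⟩ _ heq
      dsimp only at heq
      rcases Sym2.eq_iff.mp heq with ⟨h1, h2⟩ | ⟨h1, h2⟩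
      · simp only [Prod.mk.injEq, Subtype.mk.injEq]
        exact ⟨h1, h2⟩
      · exact absurd hv' (Finset.disjoint_left.mp hdisj (h1 ▸ hu))
    · intro e he
      simp only [hS, Finset.mem_filter, Finset.mem_univ, true_and] at he
      obtain ⟨⟨⟨hedge, hsel⟩, hnL⟩, hnR⟩ := he
      obtain ⟨u, v, rfl⟩ : ∃ u v, e = s(u, v) := by
        induction e using Sym2.ind with | _ u v => exact ⟨u, v, rfl⟩
      have hmemu := (hsel u (Sym2.mem_mk_left u v)).1
      have hmemv := (hsel v (Sym2.mem_mk_right u v)).1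
      have hadj : G.Adj u v := hedge
      rcases Finset.mem_union.mp hmemu with huL | huR
      · rcases Finset.mem_union.mp hmemv with hvL | hvR
        · exact absurd (fun w hw => by
            rcases Sym2.mem_iff.mp hw with rfl | rfl
            · exact huL
            · exact hvL) hnL
        · obtain ⟨h1, hz1⟩ := hsel u (Sym2.mem_mk_left u v)
          obtain ⟨h2, hz2⟩ := hsel v (Sym2.mem_mk_right u v)
          refine ⟨⟨⟨u, huL⟩, ⟨v, hvR⟩⟩, ?_, rfl⟩
          simp only [Finset.mem_filter, Finset.mem_univ, true_and]
          exact ⟨hadj, hz1, hz2⟩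
      · rcases Finset.mem_union.mp hmemv with hvL | hvR
        · obtain ⟨h1, hz1⟩ := hsel u (Sym2.mem_mk_left u v)
          obtain ⟨h2, hz2⟩ := hsel v (Sym2.mem_mk_right u v)
          refine ⟨⟨⟨v, hvL⟩, ⟨u, huR⟩⟩, ?_, Sym2.eq_swap⟩
          simp only [Finset.mem_filter, Finset.mem_univ, true_and]
          exact ⟨hadj.symm, hz2, hz1⟩
        · exact absurd (fun w hw => by
            rcases Sym2.mem_iff.mp hw with rfl | rfl
            · exact huR
            · exact hvR) hnR
  omega

private lemma crossCard_parity {V : Type*} [Fintype V] [DecidableEq V] (G : SimpleGraph V)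
    (XL XR : Finset V) (z : {v // v ∈ XL ∪ XR} → Bool) :
    ((crossCard G XL XR z : ZMod 2))
      = ∑ u : {v // v ∈ XL}, ∑ v : {v // v ∈ XR},
          (if z ⟨u.1, Finset.mem_union_left _ u.2⟩ then (1 : ZMod 2) else 0)
            * adjMat G u.1 v.1
            * (if z ⟨v.1, Finset.mem_union_right _ v.2⟩ then 1 else 0) := by
  calc ((crossCard G XL XR z : ZMod 2))
      = ∑ uv : {v // v ∈ XL} × {v // v ∈ XR},
          (if z ⟨uv.1.1, Finset.mem_union_left _ uv.1.2⟩ then (1 : ZMod 2) else 0)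
            * adjMat G uv.1.1 uv.2.1
            * (if z ⟨uv.2.1, Finset.mem_union_right _ uv.2.2⟩ then 1 else 0) := ?_
    _ = _ := Fintype.sum_prod_type _
  rw [crossCard, ← Finset.sum_boole]
  refine Finset.sum_congr rfl fun uv _ => ?_
  by_cases h1 : G.Adj uv.1.1 uv.2.1 <;>
    by_cases h2 : z ⟨uv.1.1, Finset.mem_union_left _ uv.1.2⟩ = true <;>
      by_cases h3 : z ⟨uv.2.1, Finset.mem_union_right _ uv.2.2⟩ = true <;>
        simp [adjMat, h1, h2, h3]

private lemma eta_mul_parity (r : ℕ) [NeZero r] (hre : Even r) (n : ℕ) :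
    ((r / 2 : ℕ) : ZMod r) * ((((n : ZMod 2)).val : ℕ) : ZMod r)
      = ((r / 2 : ℕ) : ZMod r) * (n : ZMod r) := by
  have hval : ((n : ZMod 2)).val = n % 2 := ZMod.val_natCast 2 n
  have h2 : ((r / 2 : ℕ) : ZMod r) * ((2 : ℕ) : ZMod r) = 0 := by
    rw [← Nat.cast_mul, Nat.div_mul_cancel hre.two_dvd, ZMod.natCast_self]
  have hn : (n : ZMod r)
      = ((n % 2 : ℕ) : ZMod r) + ((2 : ℕ) : ZMod r) * ((n / 2 : ℕ) : ZMod r) := by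
    rw [← Nat.cast_mul, ← Nat.cast_add, Nat.mod_add_div]
  rw [hval, hn, mul_add, ← mul_assoc, h2, zero_mul, add_zero]

private lemma phiX_union {V : Type*} [Fintype V] [DecidableEq V] (G : SimpleGraph V)
    (r : ℕ) [NeZero r] (bc : V → ZMod r) (XL XR : Finset V) (hdisj : Disjoint XL XR)
    (z : {v // v ∈ XL ∪ XR} → Bool) :
    phiX G r bc (XL ∪ XR) z
      = phiX G r bc XL (fun v => z ⟨v.1, Finset.mem_union_left _ v.2⟩)
        + phiX G r bc XR (fun v => z ⟨v.1, Finset.mem_union_right _ v.2⟩)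
        + ((r / 2 : ℕ) : ZMod r) * (crossCard G XL XR z : ZMod r) := by
  unfold phiX
  rw [mX_union G XL XR hdisj z,
    sum_union_subtype XL XR hdisj (f := fun v => bc v.1 * (if z v then 1 else 0))]
  push_cast
  ring

section CountPairs
variable {A B S1 S2 S3 S4 : Type*} [Fintype A] [Fintype B]
  [Fintype S1] [Fintype S2] [Fintype S3] [Fintype S4]
  [DecidableEq S1] [DecidableEq S2] [DecidableEq S3] [DecidableEq S4]

private lemma count_pairs (f1 : A → S1) (f2 : B → S2) (g1 : A → S3) (g2 : B → S4)
    (C : S1 → S2 → S3 → S4 → Prop) :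
    (∑ α : S1, ∑ β : S2, ∑ p : S3, ∑ q : S4,
      if C α β p q then
        (Finset.univ.filter (fun a : A => f1 a = α ∧ g1 a = p)).card
          * (Finset.univ.filter (fun b : B => f2 b = β ∧ g2 b = q)).card
      else 0)
    = (Finset.univ.filter
        (fun ab : A × B => C (f1 ab.1) (f2 ab.2) (g1 ab.1) (g2 ab.2))).card := by
  classical
  have hfib : ∀ st : S1 × S2 × S3 × S4,
      (if C st.1 st.2.1 st.2.2.1 st.2.2.2 then
        (Finset.univ.filter (fun a : A => f1 a = st.1 ∧ g1 a = st.2.2.1)).card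
          * (Finset.univ.filter (fun b : B => f2 b = st.2.1 ∧ g2 b = st.2.2.2)).card
      else 0)
      = ((Finset.univ.filter
          (fun ab : A × B => C (f1 ab.1) (f2 ab.2) (g1 ab.1) (g2 ab.2))).filter
            (fun ab => (f1 ab.1, f2 ab.2, g1 ab.1, g2 ab.2) = st)).card := by
    rintro ⟨α, β, p, q⟩
    rw [Finset.filter_filter]
    by_cases hc : C α β p q
    · rw [if_pos hc]
      have he : Finset.univ.filter
          (fun ab : A × B => C (f1 ab.1) (f2 ab.2) (g1 ab.1) (g2 ab.2)
            ∧ (f1 ab.1, f2 ab.2, g1 ab.1, g2 ab.2) = (α, β, p, q))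
          = Finset.univ.filter (fun ab : A × B =>
              (f1 ab.1 = α ∧ g1 ab.1 = p) ∧ (f2 ab.2 = β ∧ g2 ab.2 = q)) := by
        apply Finset.filter_congr
        intro ab _
        simp only [Prod.mk.injEq]
        constructor
        · rintro ⟨_, h1, h2, h3, h4⟩
          exact ⟨⟨h1, h3⟩, h2, h4⟩
        · rintro ⟨⟨h1, h3⟩, h2, h4⟩
          subst h1; subst h2; subst h3; subst h4
          exact ⟨hc, rfl, rfl, rfl, rfl⟩
      have hprod : Finset.univ.filter (fun ab : A × B =>
            (f1 ab.1 = α ∧ g1 ab.1 = p) ∧ (f2 ab.2 = β ∧ g2 ab.2 = q))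
          = (Finset.univ.filter (fun a : A => f1 a = α ∧ g1 a = p))
              ×ˢ (Finset.univ.filter (fun b : B => f2 b = β ∧ g2 b = q)) := by
        ext ⟨a, b⟩
        simp only [Finset.mem_filter, Finset.mem_univ, true_and, Finset.mem_product]
      rw [he, hprod, Finset.card_product]
    · rw [if_neg hc]
      symm
      rw [Finset.card_eq_zero, Finset.filter_eq_empty_iff]
      rintro ab -
      rintro ⟨hC, hst⟩
      simp only [Prod.mk.injEq] at hst
      obtain ⟨h1, h2, h3, h4⟩ := hst
      subst h1; subst h2; subst h3; subst h4
      exact hc hC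
  calc (∑ α : S1, ∑ β : S2, ∑ p : S3, ∑ q : S4,
      if C α β p q then
        (Finset.univ.filter (fun a : A => f1 a = α ∧ g1 a = p)).card
          * (Finset.univ.filter (fun b : B => f2 b = β ∧ g2 b = q)).card
      else 0)
      = ∑ st : S1 × S2 × S3 × S4,
          (if C st.1 st.2.1 st.2.2.1 st.2.2.2 then
            (Finset.univ.filter (fun a : A => f1 a = st.1 ∧ g1 a = st.2.2.1)).card
              * (Finset.univ.filter (fun b : B => f2 b = st.2.1 ∧ g2 b = st.2.2.2)).card
          else 0) := by
        rw [Fintype.sum_prod_type]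
        refine Finset.sum_congr rfl fun α _ => ?_
        rw [Fintype.sum_prod_type]
        refine Finset.sum_congr rfl fun β _ => ?_
        rw [Fintype.sum_prod_type]
    _ = ∑ st : S1 × S2 × S3 × S4,
          ((Finset.univ.filter
            (fun ab : A × B => C (f1 ab.1) (f2 ab.2) (g1 ab.1) (g2 ab.2))).filter
              (fun ab => (f1 ab.1, f2 ab.2, g1 ab.1, g2 ab.2) = st)).card :=
        Finset.sum_congr rfl fun st _ => hfib st
    _ = _ := (Finset.card_eq_sum_card_fiberwise (fun _ _ => Finset.mem_univ _)).symm
end CountPairs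

private lemma cond_equiv {V : Type*} [Fintype V] [DecidableEq V] (G : SimpleGraph V)
    (r : ℕ) [NeZero r] (hre : Even r) (bc : V → ZMod r) (XL XR : Finset V)
    (hdisj : Disjoint XL XR)
    (Ψ : ({w : V // w ∉ XL} → ZMod 2) → ({w : V // w ∉ XR} → ZMod 2) → ZMod 2)
    (hΨ : ∀ (a : {v // v ∈ XL} → ZMod 2) (b : {v // v ∈ XR} → ZMod 2),
      Ψ (bsig G XL a) (bsig G XR b)
        = ∑ u : {v // v ∈ XL}, ∑ v : {v // v ∈ XR}, a u * adjMat G u.1 v.1 * b v)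
    (γ : {w : V // w ∉ XL ∪ XR} → ZMod 2) (s : ZMod r) (z : {v // v ∈ XL ∪ XR} → Bool) :
    (bsigB G (XL ∪ XR) z = γ ∧ phiX G r bc (XL ∪ XR) z = s)
    ↔ ((∀ w : {w : V // w ∉ XL ∪ XR},
          bsigB G XL (fun v => z ⟨v.1, Finset.mem_union_left _ v.2⟩)
              ⟨w.1, fun h => w.2 (Finset.mem_union_left XR h)⟩
            + bsigB G XR (fun v => z ⟨v.1, Finset.mem_union_right _ v.2⟩)
              ⟨w.1, fun h => w.2 (Finset.mem_union_right XL h)⟩ = γ w)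
        ∧ phiX G r bc XL (fun v => z ⟨v.1, Finset.mem_union_left _ v.2⟩)
            + phiX G r bc XR (fun v => z ⟨v.1, Finset.mem_union_right _ v.2⟩)
            + ((r / 2 : ℕ) : ZMod r)
              * (((Ψ (bsigB G XL (fun v => z ⟨v.1, Finset.mem_union_left _ v.2⟩))
                    (bsigB G XR (fun v => z ⟨v.1, Finset.mem_union_right _ v.2⟩))).val : ℕ)
                  : ZMod r) = s) := by
  apply and_congr
  · rw [funext_iff]
    exact forall_congr' fun w => by rw [bsigB_union G XL XR hdisj z w]
  · have hΨc : Ψ (bsigB G XL (fun v => z ⟨v.1, Finset.mem_union_left _ v.2⟩))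
        (bsigB G XR (fun v => z ⟨v.1, Finset.mem_union_right _ v.2⟩))
        = ((crossCard G XL XR z : ZMod 2)) := by
      unfold bsigB
      rw [hΨ]
      exact (crossCard_parity G XL XR z).symm
    have hphi : phiX G r bc XL (fun v => z ⟨v.1, Finset.mem_union_left _ v.2⟩)
        + phiX G r bc XR (fun v => z ⟨v.1, Finset.mem_union_right _ v.2⟩)
        + ((r / 2 : ℕ) : ZMod r)
          * (((Ψ (bsigB G XL (fun v => z ⟨v.1, Finset.mem_union_left _ v.2⟩))
                (bsigB G XR (fun v => z ⟨v.1, Finset.mem_union_right _ v.2⟩))).val : ℕ)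
              : ZMod r)
        = phiX G r bc (XL ∪ XR) z := by
      rw [hΨc, eta_mul_parity r hre, phiX_union G r bc XL XR hdisj z]
    rw [← hphi]

set_option maxHeartbeats 2000000 in
/-- the join-step invariant establishing correctness of the rank-decomposition
dynamic program.  The number of assignments on `X_t = X_L ∪ X_R` with prescribed boundary
signature `γ` and residue `s` is the sum over compatible child states of the product of the
child state counts. -/
theorem dp_join_correct {V : Type*} [Fintype V] [DecidableEq V]
    (G : SimpleGraph V) (r : ℕ) [NeZero r] (hr : 2 ≤ r) (hre : Even r)
    (bc : V → ZMod r) (XL XR : Finset V) (hdisj : Disjoint XL XR)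
    (Ψ : ({w : V // w ∉ XL} → ZMod 2) → ({w : V // w ∉ XR} → ZMod 2) → ZMod 2)
    (hΨ : ∀ (a : {v // v ∈ XL} → ZMod 2) (b : {v // v ∈ XR} → ZMod 2),
      Ψ (bsig G XL a) (bsig G XR b)
        = ∑ u : {v // v ∈ XL}, ∑ v : {v // v ∈ XR}, a u * adjMat G u.1 v.1 * b v)
    (γ : {w : V // w ∉ XL ∪ XR} → ZMod 2) (s : ZMod r) :
    (Finset.univ.filter (fun z : {v // v ∈ XL ∪ XR} → Bool =>
        bsigB G (XL ∪ XR) z = γ ∧ phiX G r bc (XL ∪ XR) z = s)).card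
      = ∑ α : {w : V // w ∉ XL} → ZMod 2, ∑ β : {w : V // w ∉ XR} → ZMod 2,
          ∑ p : ZMod r, ∑ q : ZMod r,
          if (∀ w : {w : V // w ∉ XL ∪ XR},
                α ⟨w.1, fun h => w.2 (Finset.mem_union_left XR h)⟩
                  + β ⟨w.1, fun h => w.2 (Finset.mem_union_right XL h)⟩ = γ w)
              ∧ p + q + ((r / 2 : ℕ) : ZMod r) * (((Ψ α β).val : ℕ) : ZMod r) = s
          then (Finset.univ.filter (fun u : {v // v ∈ XL} → Bool =>
                  bsigB G XL u = α ∧ phiX G r bc XL u = p)).card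
              * (Finset.univ.filter (fun v : {v // v ∈ XR} → Bool =>
                  bsigB G XR v = β ∧ phiX G r bc XR v = q)).card
          else 0 := by
  classical
  have hcp := count_pairs (A := {v // v ∈ XL} → Bool) (B := {v // v ∈ XR} → Bool)
    (f1 := bsigB G XL) (f2 := bsigB G XR) (g1 := phiX G r bc XL) (g2 := phiX G r bc XR)
    (C := fun α β p q =>
      (∀ w : {w : V // w ∉ XL ∪ XR},
          α ⟨w.1, fun h => w.2 (Finset.mem_union_left XR h)⟩
            + β ⟨w.1, fun h => w.2 (Finset.mem_union_right XL h)⟩ = γ w)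
        ∧ p + q + ((r / 2 : ℕ) : ZMod r) * (((Ψ α β).val : ℕ) : ZMod r) = s)
  refine Eq.trans (Eq.trans ?_ hcp.symm) ?_
  swap
  · refine Finset.sum_congr rfl fun α _ => Finset.sum_congr rfl fun β _ =>
      Finset.sum_congr rfl fun p _ => Finset.sum_congr rfl fun q _ => ?_
    congr 1
  -- it remains to biject assignments on `XL ∪ XR` with compatible pairs
  refine Finset.card_bij
    (fun z (_ : z ∈ _) =>
      ((fun v : {v // v ∈ XL} => z ⟨v.1, Finset.mem_union_left _ v.2⟩),
       (fun v : {v // v ∈ XR} => z ⟨v.1, Finset.mem_union_right _ v.2⟩))) ?_ ?_ ?_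
  · intro z hz
    simp only [Finset.mem_filter] at hz ⊢
    exact ⟨Finset.mem_univ _,
      (cond_equiv G r hre bc XL XR hdisj Ψ hΨ γ s z).mp hz.2⟩
  · intro z1 h1 z2 h2 heq
    simp only [Prod.mk.injEq] at heq
    obtain ⟨heL, heR⟩ := heq
    funext v
    rcases Finset.mem_union.mp v.2 with hL | hR
    · have := congrFun heL ⟨v.1, hL⟩
      simpa using this
    · have := congrFun heR ⟨v.1, hR⟩
      simpa using this
  · rintro ⟨a, b⟩ hab
    simp only [Finset.mem_filter] at hab
    refine ⟨fun v : {v // v ∈ XL ∪ XR} =>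
      if h : v.1 ∈ XL then a ⟨v.1, h⟩
      else b ⟨v.1, (Finset.mem_union.mp v.2).resolve_left h⟩, ?_, ?_⟩
    · simp only [Finset.mem_filter]
      refine ⟨Finset.mem_univ _, ?_⟩
      have haL : (fun v : {v // v ∈ XL} =>
          (fun v : {v // v ∈ XL ∪ XR} =>
            if h : v.1 ∈ XL then a ⟨v.1, h⟩
            else b ⟨v.1, (Finset.mem_union.mp v.2).resolve_left h⟩)
              ⟨v.1, Finset.mem_union_left _ v.2⟩) = a := by
        funext v
        exact dif_pos v.2
      have hbR : (fun v : {v // v ∈ XR} =>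
          (fun v : {v // v ∈ XL ∪ XR} =>
            if h : v.1 ∈ XL then a ⟨v.1, h⟩
            else b ⟨v.1, (Finset.mem_union.mp v.2).resolve_left h⟩)
              ⟨v.1, Finset.mem_union_right _ v.2⟩) = b := by
        funext v
        have hnot : v.1 ∉ XL := fun h => Finset.disjoint_left.mp hdisj h v.2
        simp only [dif_neg hnot]
      refine (cond_equiv G r hre bc XL XR hdisj Ψ hΨ γ s _).mpr ?_
      rw [haL, hbR]
      exact hab.2
    · simp only [Prod.mk.injEq]
      constructor
      · funext v
        exact dif_pos v.2
      · funext v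
        have hnot : v.1 ∉ XL := fun h => Finset.disjoint_left.mp hdisj h v.2
        simp only [dif_neg hnot]
end

section
/- Let t ≥ 1 and let G' = G[K_t] be the true-twin blow-up of G: the simple graph on V × Fin t in which (u,i) and (v,j) are adjacent if and only if either u = v and i ≠ j, or u ≠ v and u is adjacent to v in G. Let A' denote the F₂-adjacency matrix of G'. Then for every X ⊆ V, rank_{F₂} A'[X × Fin t, (V\X) × Fin t] = rank_{F₂} A[X, V\X]; that is, the cut-rank across a cut of G' whose two sides are unions of entire twin classes equals the cut-rank of the corresponding cut of G. -/
open Classical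

/-- The cut matrix `A[X, V\X]` of the cut `(X, V\X)`. -/
noncomputable def cutMat {V : Type*} [Fintype V] (G : SimpleGraph V) (X : Finset V) :
    Matrix {v // v ∈ X} {w : V // w ∉ X} (ZMod 2) :=
  fun u w => adjMat G u.1 w.1

/-- The true-twin blow-up `G[K_t]`: `(u,i)` and `(v,j)` are adjacent iff `u = v` and
`i ≠ j`, or `u ≠ v` and `u` is adjacent to `v` in `G`. -/
def blowup {V : Type*} (G : SimpleGraph V) (t : ℕ) : SimpleGraph (V × Fin t) where
  Adj p q := (p.1 = q.1 ∧ p.2 ≠ q.2) ∨ (p.1 ≠ q.1 ∧ G.Adj p.1 q.1)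
  symm := by
    refine ⟨fun p q h => ?_⟩
    rcases h with ⟨h1, h2⟩ | ⟨h1, h2⟩
    · exact Or.inl ⟨h1.symm, h2.symm⟩
    · exact Or.inr ⟨h1.symm, h2.symm⟩
  loopless := by
    refine ⟨fun p h => ?_⟩
    rcases h with ⟨_, h2⟩ | ⟨h1, _⟩
    · exact h2 rfl
    · exact h1 rfl

/-- the cut-rank across a cut of the true-twin blow-up `G[K_t]` whose two
sides are unions of entire twin classes equals the cut-rank of the corresponding cut of
`G`. -/
theorem blowup_cut_rank {V : Type*} [Fintype V] [DecidableEq V]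
    (G : SimpleGraph V) (t : ℕ) (ht : 1 ≤ t) (X : Finset V) :
    (cutMat (blowup G t) (X ×ˢ (Finset.univ : Finset (Fin t)))).rank
      = (cutMat G X).rank := by
  haveI : NeZero t := ⟨Nat.one_le_iff_ne_zero.mp ht⟩
  set Y := X ×ˢ (Finset.univ : Finset (Fin t)) with hY
  set M := cutMat (blowup G t) Y with hM
  set C := cutMat G X with hC
  -- row/column replicate matrices
  set R : Matrix {p // p ∈ Y} {v // v ∈ X} (ZMod 2) :=
    fun p u => if p.1.1 = u.1 then 1 else 0 with hR
  set S : Matrix {w : V // w ∉ X} {q : V × Fin t // q ∉ Y} (ZMod 2) :=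
    fun w q => if q.1.1 = w.1 then 1 else 0 with hS
  have memY : ∀ p : V × Fin t, p ∈ Y ↔ p.1 ∈ X := by
    intro p; simp [hY, Finset.mem_product]
  have hMent : ∀ (p : {p // p ∈ Y}) (q : {q : V × Fin t // q ∉ Y}),
      M p q = C ⟨p.1.1, (memY p.1).mp p.2⟩ ⟨q.1.1, fun h => q.2 ((memY q.1).mpr h)⟩ := by
    intro p q
    have hp : p.1.1 ∈ X := (memY p.1).mp p.2
    have hq : q.1.1 ∉ X := fun h => q.2 ((memY q.1).mpr h)
    have hne : p.1.1 ≠ q.1.1 := fun h => hq (h ▸ hp)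
    simp only [hM, hC, cutMat, adjMat]
    have : (blowup G t).Adj p.1 q.1 ↔ G.Adj p.1.1 q.1.1 := by
      constructor
      · rintro (⟨h1, _⟩ | ⟨_, h2⟩); exact absurd h1 hne; exact h2
      · intro h; exact Or.inr ⟨hne, h⟩
    simp [this]
  have hfact : M = R * C * S := by
    ext p q
    have hp : p.1.1 ∈ X := (memY p.1).mp p.2
    have hq : q.1.1 ∉ X := fun h => q.2 ((memY q.1).mpr h)
    rw [hMent p q]
    simp only [Matrix.mul_apply]
    simp only [hR, hS]
    rw [Finset.sum_eq_single (⟨q.1.1, hq⟩ : {w : V // w ∉ X})]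
    · rw [Finset.sum_eq_single (⟨p.1.1, hp⟩ : {v // v ∈ X})]
      · simp
      · intro b _ hb
        have : p.1.1 ≠ b.1 := fun h => hb (by ext; exact h.symm)
        simp [this]
      · simp
    · intro b _ hb
      have : q.1.1 ≠ b.1 := fun h => hb (by ext; exact h.symm)
      simp [this]
    · simp
  -- reverse factorization
  set i0 : Fin t := ⟨0, ht⟩ with hi0
  set R' : Matrix {v // v ∈ X} {p // p ∈ Y} (ZMod 2) :=
    fun u p => if p.1 = (u.1, i0) then 1 else 0 with hR'
  set S' : Matrix {q : V × Fin t // q ∉ Y} {w : V // w ∉ X} (ZMod 2) :=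
    fun q w => if q.1 = (w.1, i0) then 1 else 0 with hS'
  have hfact2 : C = R' * M * S' := by
    ext u w
    simp only [Matrix.mul_apply]
    simp only [hR', hS']
    have hw : ((w.1, i0) : V × Fin t) ∉ Y := fun h => w.2 ((memY _).mp h)
    have hu : ((u.1, i0) : V × Fin t) ∈ Y := (memY _).mpr u.2
    rw [Finset.sum_eq_single (⟨(w.1, i0), hw⟩ : {q : V × Fin t // q ∉ Y})]
    · rw [Finset.sum_eq_single (⟨(u.1, i0), hu⟩ : {p // p ∈ Y})]
      · rw [hMent]; simp
      · intro b _ hb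
        have : b.1 ≠ (u.1, i0) := fun h => hb (by ext : 1; exact h)
        simp [this]
      · simp
    · intro b _ hb
      have : b.1 ≠ (w.1, i0) := fun h => hb (by ext : 1; exact h)
      simp [this]
    · simp
  apply le_antisymm
  · calc M.rank = (R * C * S).rank := by rw [hfact]
      _ ≤ (R * C).rank := Matrix.rank_mul_le_left _ _
      _ ≤ C.rank := Matrix.rank_mul_le_right _ _
  · calc C.rank = (R' * M * S').rank := by rw [hfact2]
      _ ≤ (R' * M).rank := Matrix.rank_mul_le_left _ _
      _ ≤ M.rank := Matrix.rank_mul_le_right _ _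
end
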